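/- For α = 5/2 and r = √6 the strict inequality 2(α/r)·₃F₂(α, α+1, 3/2; 2, 2; 4/r²) > ₃F₂(α, α, 1/2; 1, 1; 4/r²) + (α²/r²)·₃F₂(α+1, α+1, 3/2; 2, 3; 4/r²) holds; explicitly, 2·(5/(2√6))·₃F₂(5/2, 7/2, 3/2; 2, 2; 2/3) > ₃F₂(5/2, 5/2, 1/2; 1, 1; 2/3) + (25/24)·₃F₂(7/2, 7/2, 3/2; 2, 3; 2/3). -/

import Mathlib

open scoped BigOperators

/-- The (rising) Pochhammer symbol `(a)_n` for a real number `a`. -/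
noncomputable def poch (a : ℝ) (n : ℕ) : ℝ := (ascPochhammer ℝ n).eval a

/-- The generalized hypergeometric series `₃F₂(a₁,a₂,a₃; b₁,b₂; x)`. -/
noncomputable def F32 (a₁ a₂ a₃ b₁ b₂ x : ℝ) : ℝ :=
  ∑' n : ℕ, (poch a₁ n * poch a₂ n * poch a₃ n) /
      (poch b₁ n * poch b₂ n * (n.factorial : ℝ)) * x ^ n

lemma poch_zero (a : ℝ) : poch a 0 = 1 := by simp [poch, ascPochhammer]

lemma poch_succ (a : ℝ) (n : ℕ) : poch a (n + 1) = poch a n * (a + n) := by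
  simp [poch, ascPochhammer_succ_eval]

lemma poch_pos {a : ℝ} (ha : 0 < a) (n : ℕ) : 0 < poch a n := by
  induction n with
  | zero => simp [poch_zero]
  | succ n ih => rw [poch_succ]; positivity

/-- The general term of a `₃F₂` series. -/
noncomputable def T (a₁ a₂ a₃ b₁ b₂ x : ℝ) (n : ℕ) : ℝ :=
  (poch a₁ n * poch a₂ n * poch a₃ n) /
      (poch b₁ n * poch b₂ n * (n.factorial : ℝ)) * x ^ n

lemma T_nonneg {a₁ a₂ a₃ b₁ b₂ x : ℝ} (h1 : 0 < a₁) (h2 : 0 < a₂) (h3 : 0 < a₃)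
    (h4 : 0 < b₁) (h5 : 0 < b₂) (hx : 0 ≤ x) (n : ℕ) : 0 ≤ T a₁ a₂ a₃ b₁ b₂ x n := by
  have := poch_pos h1 n; have := poch_pos h2 n; have := poch_pos h3 n
  have := poch_pos h4 n; have := poch_pos h5 n
  have : (0:ℝ) < n.factorial := by positivity
  unfold T; positivity

lemma T_succ {a₁ a₂ a₃ b₁ b₂ x : ℝ} (h4 : 0 < b₁) (h5 : 0 < b₂) (n : ℕ) :
    T a₁ a₂ a₃ b₁ b₂ x (n + 1) =
      T a₁ a₂ a₃ b₁ b₂ x n *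
        ((a₁ + n) * (a₂ + n) * (a₃ + n) * x / ((b₁ + n) * (b₂ + n) * (n + 1))) := by
  have hb1 := poch_pos h4 n
  have hb2 := poch_pos h5 n
  have hf : (0:ℝ) < n.factorial := by positivity
  have hb1' : b₁ + (n:ℝ) > 0 := by positivity
  have hb2' : b₂ + (n:ℝ) > 0 := by positivity
  have hn1 : (0:ℝ) < (n:ℝ) + 1 := by positivity
  unfold T
  rw [poch_succ, poch_succ, poch_succ, poch_succ, poch_succ, Nat.factorial_succ,
    pow_succ]
  push_cast
  field_simp

/-- Ratio bound: for `n ≥ 20` each of the three series has term ratio `≤ 3/4`. -/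
lemma T_ratio {a₁ a₂ a₃ b₁ b₂ : ℝ} (h1 : 0 < a₁) (h2 : 0 < a₂) (h3 : 0 < a₃)
    (h4 : 0 < b₁) (h5 : 0 < b₂)
    (hcube : ∀ m : ℕ, 20 ≤ m →
      8 * ((a₁ + m) * (a₂ + m) * (a₃ + m)) ≤ 9 * ((b₁ + m) * (b₂ + m) * (m + 1)))
    {n : ℕ} (hn : 20 ≤ n) :
    T a₁ a₂ a₃ b₁ b₂ (2/3) (n + 1) ≤ 3 / 4 * T a₁ a₂ a₃ b₁ b₂ (2/3) n := by
  rw [T_succ h4 h5]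
  have hT := T_nonneg h1 h2 h3 h4 h5 (by norm_num : (0:ℝ) ≤ 2/3) n
  have hb1' : b₁ + (n:ℝ) > 0 := by positivity
  have hb2' : b₂ + (n:ℝ) > 0 := by positivity
  have hn1 : (0:ℝ) < (n:ℝ) + 1 := by positivity
  have hQ : (0:ℝ) < (b₁ + n) * (b₂ + n) * (n + 1) := by positivity
  have key : (a₁ + n) * (a₂ + n) * (a₃ + n) * (2/3) / ((b₁ + n) * (b₂ + n) * (n + 1))
      ≤ 3 / 4 := by
    rw [div_le_iff₀ hQ]
    have := hcube n hn
    nlinarith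
  calc T a₁ a₂ a₃ b₁ b₂ (2/3) n *
        ((a₁ + n) * (a₂ + n) * (a₃ + n) * (2/3) / ((b₁ + n) * (b₂ + n) * (n + 1)))
      ≤ T a₁ a₂ a₃ b₁ b₂ (2/3) n * (3/4) := by
        exact mul_le_mul_of_nonneg_left key hT
    _ = 3 / 4 * T a₁ a₂ a₃ b₁ b₂ (2/3) n := by ring

/-- Summability and tail bound packaged from the ratio bound. -/
lemma geom_tail {f : ℕ → ℝ} (hpos : ∀ n, 0 ≤ f n)
    (hrat : ∀ n, 20 ≤ n → f (n + 1) ≤ 3 / 4 * f n) :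
    Summable f ∧ ∑' n, f n ≤ ∑ n ∈ Finset.range 20, f n + 4 * f 20 := by
  have hsum : Summable f := by
    apply summable_of_ratio_norm_eventually_le (r := 3/4) (by norm_num)
    filter_upwards [Filter.eventually_ge_atTop 20] with n hn
    rw [Real.norm_eq_abs, Real.norm_eq_abs, abs_of_nonneg (hpos _), abs_of_nonneg (hpos _)]
    exact hrat n hn
  refine ⟨hsum, ?_⟩
  have hdecay : ∀ i : ℕ, f (i + 20) ≤ f 20 * (3/4) ^ i := by
    intro i
    induction i with
    | zero => simp
    | succ i ih =>
      have h1 : f (i + 20 + 1) ≤ 3 / 4 * f (i + 20) := hrat _ (by omega)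
      have h2 : 3 / 4 * f (i + 20) ≤ 3 / 4 * (f 20 * (3/4) ^ i) := by linarith
      calc f (i + 1 + 20) = f (i + 20 + 1) := by ring_nf
        _ ≤ 3 / 4 * (f 20 * (3/4) ^ i) := le_trans h1 h2
        _ = f 20 * (3/4) ^ (i + 1) := by ring
  have htail : ∑' i, f (i + 20) ≤ 4 * f 20 := by
    have hg : Summable (fun i : ℕ => f 20 * (3/4 : ℝ) ^ i) :=
      (summable_geometric_of_lt_one (by norm_num) (by norm_num)).mul_left _
    calc ∑' i, f (i + 20) ≤ ∑' i : ℕ, f 20 * (3/4 : ℝ) ^ i :=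
          Summable.tsum_le_tsum hdecay ((summable_nat_add_iff 20).2 hsum) hg
      _ = f 20 * (1 - 3/4 : ℝ)⁻¹ := by
          rw [tsum_mul_left, tsum_geometric_of_lt_one (by norm_num) (by norm_num)]
      _ = 4 * f 20 := by norm_num [mul_comm]
  have := Summable.sum_add_tsum_nat_add (f := f) 20 hsum
  linarith

set_option maxHeartbeats 4000000 in
/-- The counterexample of Bénéteau–Khavinson–Seco: for `α = 5/2`, `r = √6` the
zero-in-bidisk criterion holds. -/
theorem stmt17 :
    2 * (5 / (2 * Real.sqrt 6)) * F32 (5 / 2) (7 / 2) (3 / 2) 2 2 (2 / 3) >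
      F32 (5 / 2) (5 / 2) (1 / 2) 1 1 (2 / 3) +
        25 / 24 * F32 (7 / 2) (7 / 2) (3 / 2) 2 3 (2 / 3) := by
  -- term functions
  set f1 := T (5/2) (7/2) (3/2) 2 2 (2/3) with hf1
  set f2 := T (5/2) (5/2) (1/2) 1 1 (2/3) with hf2
  set f3 := T (7/2) (7/2) (3/2) 2 3 (2/3) with hf3
  have hF1 : F32 (5/2) (7/2) (3/2) 2 2 (2/3) = ∑' n, f1 n := rfl
  have hF2 : F32 (5/2) (5/2) (1/2) 1 1 (2/3) = ∑' n, f2 n := rfl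
  have hF3 : F32 (7/2) (7/2) (3/2) 2 3 (2/3) = ∑' n, f3 n := rfl
  have h1pos : ∀ n, 0 ≤ f1 n :=
    T_nonneg (by norm_num) (by norm_num) (by norm_num) (by norm_num) (by norm_num) (by norm_num)
  have h2pos : ∀ n, 0 ≤ f2 n :=
    T_nonneg (by norm_num) (by norm_num) (by norm_num) (by norm_num) (by norm_num) (by norm_num)
  have h3pos : ∀ n, 0 ≤ f3 n :=
    T_nonneg (by norm_num) (by norm_num) (by norm_num) (by norm_num) (by norm_num) (by norm_num)
  have h1rat : ∀ n, 20 ≤ n → f1 (n + 1) ≤ 3/4 * f1 n := by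
    intro n hn
    refine T_ratio (by norm_num) (by norm_num) (by norm_num) (by norm_num) (by norm_num)
      (fun m hm => ?_) hn
    have hm' : (20:ℝ) ≤ m := by exact_mod_cast hm
    nlinarith [sq_nonneg ((m:ℝ) - 20)]
  have h2rat : ∀ n, 20 ≤ n → f2 (n + 1) ≤ 3/4 * f2 n := by
    intro n hn
    refine T_ratio (by norm_num) (by norm_num) (by norm_num) (by norm_num) (by norm_num)
      (fun m hm => ?_) hn
    have hm' : (20:ℝ) ≤ m := by exact_mod_cast hm
    nlinarith [sq_nonneg ((m:ℝ) - 20)]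
  have h3rat : ∀ n, 20 ≤ n → f3 (n + 1) ≤ 3/4 * f3 n := by
    intro n hn
    refine T_ratio (by norm_num) (by norm_num) (by norm_num) (by norm_num) (by norm_num)
      (fun m hm => ?_) hn
    have hm' : (20:ℝ) ≤ m := by exact_mod_cast hm
    nlinarith [sq_nonneg ((m:ℝ) - 20)]
  obtain ⟨h1sum, -⟩ := geom_tail h1pos h1rat
  obtain ⟨h2sum, h2tail⟩ := geom_tail h2pos h2rat
  obtain ⟨h3sum, h3tail⟩ := geom_tail h3pos h3rat
  -- lower bound on the left sum
  have hL : ∑ n ∈ Finset.range 20, f1 n ≤ ∑' n, f1 n :=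
    Summable.sum_le_tsum _ (fun n _ => h1pos n) h1sum
  -- sqrt 6 bound
  have hs6 : Real.sqrt 6 < 2.4495 := by
    nlinarith [Real.sq_sqrt (by norm_num : (6:ℝ) ≥ 0), Real.sqrt_nonneg 6]
  have hs6pos : 0 < Real.sqrt 6 := Real.sqrt_pos.2 (by norm_num)
  have hc : (5 / 2.4495 : ℝ) < 5 / Real.sqrt 6 := by
    apply div_lt_div_of_pos_left (by norm_num) hs6pos hs6
  -- numeric evaluation of the partial sums and the terms at 20
  have e1 : ∑ n ∈ Finset.range 20, f1 n ≥ 40.7 := by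
    rw [hf1]
    unfold T
    simp only [Finset.sum_range_succ, Finset.sum_range_zero, poch_succ, poch_zero]
    norm_num [Nat.factorial]
  have e2 : ∑ n ∈ Finset.range 20, f2 n + 4 * f2 20 ≤ 45.42 := by
    rw [hf2]
    unfold T
    simp only [Finset.sum_range_succ, Finset.sum_range_zero, poch_succ, poch_zero]
    norm_num [Nat.factorial]
  have e3 : ∑ n ∈ Finset.range 20, f3 n + 4 * f3 20 ≤ 35.58 := by
    rw [hf3]
    unfold T
    simp only [Finset.sum_range_succ, Finset.sum_range_zero, poch_succ, poch_zero]
    norm_num [Nat.factorial]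
  have hR2 : ∑' n, f2 n ≤ 45.42 := le_trans h2tail e2
  have hR3 : ∑' n, f3 n ≤ 35.58 := le_trans h3tail e3
  have hL' : (40.7 : ℝ) ≤ ∑' n, f1 n := le_trans e1 hL
  rw [hF1, hF2, hF3]
  have hS1pos : (0:ℝ) < ∑' n, f1 n := lt_of_lt_of_le (by norm_num) hL'
  have key : 2 * (5 / (2 * Real.sqrt 6)) * ∑' n, f1 n ≥ (5 / 2.4495) * 40.7 := by
    have h1 : 2 * (5 / (2 * Real.sqrt 6)) = 5 / Real.sqrt 6 := by
      field_simp
    rw [h1]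
    have h2 : (5 / 2.4495 : ℝ) * 40.7 ≤ (5 / Real.sqrt 6) * 40.7 := by
      nlinarith
    have h3 : (5 / Real.sqrt 6) * 40.7 ≤ (5 / Real.sqrt 6) * ∑' n, f1 n := by
      have : (0:ℝ) < 5 / Real.sqrt 6 := by positivity
      nlinarith
    linarith
  have : (5 / 2.4495 : ℝ) * 40.7 > 45.42 + 25/24 * 35.58 := by norm_num
  nlinarith [hR2, hR3]
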